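/- For every integer r ≥ 1, ₍ᵣ₊₃₎F₍ᵣ₊₂₎({1}_{r+1}, 3/2, 3/2; {2}_{r+2}; 1) = (8(−1)^{r−1}/(π (r−1)!)) · ∫₀¹ (K(t) − π/2) · log^{r−1}(t) / t dt. -/

import Mathlib

open scoped BigOperators
open scoped Real
open Filter

/-- Pochhammer symbol `(x)_n = x (x+1) ⋯ (x+n-1)` for a real `x`. -/
noncomputable def poch (x : ℝ) (n : ℕ) : ℝ := ∏ i ∈ Finset.range n, (x + i)

/-- The generalized hypergeometric series `ₚF_q(a; b; z)`, where the numerator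
parameters are the entries of the list `a` and the denominator parameters are
the entries of the list `b`. -/
noncomputable def hyp (a b : List ℝ) (z : ℝ) : ℝ :=
  ∑' n : ℕ, ((a.map fun x => poch x n).prod / (b.map fun x => poch x n).prod)
    * z ^ n / (n.factorial : ℝ)

/-- The complete elliptic integral of the first kind, in the parameter
(`m = k²`) convention: `K(m) = ∫₀^{π/2} (1 − m sin²θ)^{−1/2} dθ`. -/
noncomputable def ellipticK (m : ℝ) : ℝ :=
  ∫ θ in (0:ℝ)..(π / 2), (1 - m * Real.sin θ ^ 2) ^ (-(1:ℝ) / 2)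

/-
Expanding `(1 - m sin²θ)^(-1/2)` by the binomial series and integrating term by term with
Wallis' formula gives `K(m) = (π/2) ∑ wₙ² mⁿ`, where `wₙ = (1/2)ₙ / n!`. Hence
`(K(t) - π/2) / t = (π/2) ∑ wₙ₊₁² tⁿ`, and the moments `∫₀¹ tⁿ (-log t)ᵏ dt = k! / (n+1)ᵏ⁺¹`
(a Gamma integral after `t = e⁻ˣ`) turn the right-hand side into `4 ∑ wₙ₊₁² / (n+1)ʳ`.
As `(1)ₙ = n!`, `(2)ₙ = (n+1)!` and `(3/2)ₙ = 2 wₙ₊₁ (n+1)!`, this is the hypergeometric series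
term by term. The bound `wₙ₊₁² ≤ 1/(2n+3)` makes the series of absolute moments converge, which
justifies integrating term by term.
-/

open Real Set MeasureTheory
open scoped Nat

-- `wallisCoeff n = (1/2)ₙ / n! = C(2n, n) / 4ⁿ`, in the form of `integral_sin_pow_even`.
noncomputable def wallisCoeff (n : ℕ) : ℝ :=
  ∏ i ∈ Finset.range n, (2 * (i : ℝ) + 1) / (2 * i + 2)

lemma wallisCoeff_succ (n : ℕ) :
    wallisCoeff (n + 1) = wallisCoeff n * ((2 * n + 1) / (2 * n + 2)) :=
  Finset.prod_range_succ _ _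

lemma wallisCoeff_nonneg (n : ℕ) : 0 ≤ wallisCoeff n :=
  Finset.prod_nonneg fun _ _ => by positivity

lemma wallisCoeff_le_one (n : ℕ) : wallisCoeff n ≤ 1 :=
  Finset.prod_le_one (fun _ _ => by positivity) fun _ _ =>
    (div_le_one (by positivity)).mpr (by linarith)

lemma wallisCoeff_sq_mul_le_one (n : ℕ) : wallisCoeff n ^ 2 * (2 * n + 1) ≤ 1 := by
  induction n with
  | zero => simp [wallisCoeff]
  | succ n ih =>
    have hfactor : (2 * (n : ℝ) + 1) * (2 * n + 3) / (2 * n + 2) ^ 2 ≤ 1 := by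
      rw [div_le_one (by positivity)]
      nlinarith
    calc wallisCoeff (n + 1) ^ 2 * (2 * ↑(n + 1) + 1)
        = wallisCoeff n ^ 2 * (2 * n + 1) * ((2 * n + 1) * (2 * n + 3) / (2 * n + 2) ^ 2) := by
          rw [wallisCoeff_succ]
          push_cast
          field_simp
          ring
      _ ≤ 1 * 1 := by gcongr
      _ = 1 := one_mul 1

lemma summable_wallisCoeff_succ_sq_div_pow (k : ℕ) :
    Summable fun n : ℕ => wallisCoeff (n + 1) ^ 2 / ((n : ℝ) + 1) ^ (k + 1) := by
  have hbound (n : ℕ) :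
      wallisCoeff (n + 1) ^ 2 / ((n : ℝ) + 1) ^ (k + 1) ≤ 1 / ((n : ℝ) + 1) ^ 2 := by
    have hn : (1 : ℝ) ≤ n + 1 := by linarith [n.cast_nonneg (α := ℝ)]
    have hsq : wallisCoeff (n + 1) ^ 2 ≤ 1 / ((n : ℝ) + 1) := by
      rw [le_div_iff₀ (by positivity)]
      refine le_trans ?_ (wallisCoeff_sq_mul_le_one (n + 1))
      gcongr
      push_cast
      linarith
    calc wallisCoeff (n + 1) ^ 2 / ((n : ℝ) + 1) ^ (k + 1)
        ≤ 1 / ((n : ℝ) + 1) / ((n : ℝ) + 1) ^ (k + 1) := by gcongr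
      _ = 1 / ((n : ℝ) + 1) ^ (k + 2) := by rw [div_div, pow_succ' _ (k + 1)]
      _ ≤ 1 / ((n : ℝ) + 1) ^ 2 :=
          one_div_le_one_div_of_le (by positivity) (pow_le_pow_right₀ hn (by omega))
  refine Summable.of_nonneg_of_le (fun n => by have := wallisCoeff_nonneg (n + 1); positivity)
    hbound ?_
  exact_mod_cast (summable_nat_add_iff 1).mpr (Real.summable_one_div_nat_pow.mpr one_lt_two)

lemma poch_succ (x : ℝ) (n : ℕ) : poch x (n + 1) = poch x n * (x + n) :=
  Finset.prod_range_succ _ _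

lemma ascPochhammer_eval_eq_poch (x : ℝ) (n : ℕ) : (ascPochhammer ℝ n).eval x = poch x n := by
  induction n with
  | zero => simp [poch]
  | succ n ih => rw [ascPochhammer_succ_eval, ih, poch_succ]

lemma poch_one (n : ℕ) : poch 1 n = n ! := by
  induction n with
  | zero => simp [poch]
  | succ n ih => rw [poch_succ, ih, Nat.factorial_succ]; push_cast; ring

lemma poch_two (n : ℕ) : poch 2 n = (n + 1)! := by
  induction n with
  | zero => simp [poch]
  | succ n ih => rw [poch_succ, ih, Nat.factorial_succ (n + 1)]; push_cast; ring

lemma poch_half (n : ℕ) : poch (1 / 2) n = wallisCoeff n * n ! := by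
  induction n with
  | zero => simp [poch, wallisCoeff]
  | succ n ih =>
    rw [poch_succ, ih, wallisCoeff_succ, Nat.factorial_succ]
    push_cast
    field_simp
    ring

lemma poch_three_halves (n : ℕ) : poch (3 / 2) n = 2 * wallisCoeff (n + 1) * (n + 1)! := by
  induction n with
  | zero => simp [poch, wallisCoeff]
  | succ n ih =>
    rw [poch_succ, ih, wallisCoeff_succ (n + 1), Nat.factorial_succ (n + 1)]
    push_cast
    field_simp
    ring

theorem hyp_ones_three_halves_twos_one (r : ℕ) :
    hyp (List.replicate (r + 1) (1 : ℝ) ++ [3 / 2, 3 / 2]) (List.replicate (r + 2) (2 : ℝ)) 1 =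
      ∑' n : ℕ, 4 * (wallisCoeff (n + 1) ^ 2 / ((n : ℝ) + 1) ^ r) := by
  refine tsum_congr fun n => ?_
  simp only [List.map_append, List.map_replicate, List.prod_append, List.prod_replicate,
    List.map_cons, List.map_nil, List.prod_cons, List.prod_nil, poch_one, poch_two,
    poch_three_halves, one_pow, mul_one]
  have : ((n + 1)! : ℝ) = (n + 1) * n ! := by push_cast [Nat.factorial_succ]; ring
  rw [this, mul_pow]
  field_simp
  ring

theorem hasSum_wallisCoeff_mul_pow {x : ℝ} (hx : |x| < 1) :
    HasSum (fun n => wallisCoeff n * x ^ n) ((1 - x) ^ (-(1 / 2) : ℝ)) := by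
  have hseries := (one_div_one_sub_rpow_hasFPowerSeriesOnBall_zero (1 / 2)).hasSum
    (y := x) (by simpa [enorm_eq_nnnorm, ← NNReal.coe_lt_coe] using hx)
  have hmultichoose (n : ℕ) : Ring.multichoose (1 / 2 : ℝ) n = wallisCoeff n := by
    have h := Ring.factorial_nsmul_multichoose_eq_ascPochhammer (1 / 2 : ℝ) n
    rw [Polynomial.ascPochhammer_smeval_eq_eval, ascPochhammer_eval_eq_poch, poch_half,
      nsmul_eq_mul, mul_comm] at h
    exact mul_right_cancel₀ (by positivity) h
  simp only [FormalMultilinearSeries.ofScalars_apply_eq, zero_add, ← Ring.multichoose_eq,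
    hmultichoose, smul_eq_mul] at hseries
  rwa [rpow_neg (by linarith [le_abs_self x]), inv_eq_one_div]

lemma integral_sin_pow_even_zero_pi_div_two (n : ℕ) :
    ∫ x in (0:ℝ)..(π / 2), sin x ^ (2 * n) = π / 2 * wallisCoeff n := by
  induction n with
  | zero => simp [wallisCoeff]
  | succ k ih =>
    rw [wallisCoeff_succ, ← mul_assoc, ← ih, Nat.mul_succ, integral_sin_pow, sin_zero,
      cos_pi_div_two, zero_pow (by omega), zero_mul, mul_zero, sub_zero, zero_div, zero_add]
    push_cast
    ring

theorem hasSum_ellipticK {m : ℝ} (hm : |m| < 1) :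
    HasSum (fun n => π / 2 * (wallisCoeff n ^ 2 * m ^ n)) (ellipticK m) := by
  have hsin (θ : ℝ) : |m * sin θ ^ 2| ≤ |m| := by
    rw [abs_mul, abs_sq]
    exact mul_le_of_le_one_right (abs_nonneg m) (sin_sq_le_one θ)
  have hterm (n : ℕ) : ∫ θ in (0:ℝ)..(π / 2), wallisCoeff n * (m * sin θ ^ 2) ^ n
      = π / 2 * (wallisCoeff n ^ 2 * m ^ n) := by
    simp_rw [mul_pow, ← pow_mul, ← mul_assoc]
    rw [intervalIntegral.integral_const_mul, integral_sin_pow_even_zero_pi_div_two]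
    ring
  simp_rw [← hterm]
  refine intervalIntegral.hasSum_integral_of_dominated_convergence (fun n _ => |m| ^ n)
    (fun n => by fun_prop) (fun n => ae_of_all _ fun θ _ => ?_)
    (ae_of_all _ fun _ _ => summable_geometric_of_lt_one (abs_nonneg m) hm)
    intervalIntegrable_const (ae_of_all _ fun θ _ => ?_)
  · rw [norm_mul, norm_pow, Real.norm_eq_abs, Real.norm_eq_abs]
    calc |wallisCoeff n| * |m * sin θ ^ 2| ^ n ≤ 1 * |m| ^ n :=
          mul_le_mul (abs_le.mpr ⟨by linarith [wallisCoeff_nonneg n], wallisCoeff_le_one n⟩)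
            (pow_le_pow_left₀ (abs_nonneg _) (hsin θ) n) (by positivity) zero_le_one
      _ = |m| ^ n := one_mul _
  · rw [neg_div]
    exact hasSum_wallisCoeff_mul_pow ((hsin θ).trans_lt hm)

theorem hasSum_ellipticK_sub_div {m : ℝ} (hm : |m| < 1) (hm0 : m ≠ 0) :
    HasSum (fun n => π / 2 * wallisCoeff (n + 1) ^ 2 * m ^ n) ((ellipticK m - π / 2) / m) := by
  have h := ((hasSum_nat_add_iff' 1).mpr (hasSum_ellipticK hm)).div_const m
  have hW0 : wallisCoeff 0 = 1 := Finset.prod_range_zero _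
  simp only [Finset.range_one, Finset.sum_singleton, hW0, one_pow, pow_zero, mul_one] at h
  have hterm : (fun n => π / 2 * wallisCoeff (n + 1) ^ 2 * m ^ n)
      = fun n => π / 2 * (wallisCoeff (n + 1) ^ 2 * m ^ (n + 1)) / m :=
    funext fun n => by field_simp; ring
  rw [hterm]
  exact h

lemma image_exp_neg_Ioi_zero : (fun x : ℝ => exp (-x)) '' Ioi 0 = Ioo 0 1 := by
  ext y
  constructor
  · rintro ⟨x, hx, rfl⟩
    exact ⟨exp_pos _, exp_lt_one_iff.mpr (neg_lt_zero.mpr hx)⟩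
  · rintro ⟨hy0, hy1⟩
    exact ⟨-log y, neg_pos.mpr (log_neg hy0 hy1), by simp [exp_log hy0]⟩

theorem integral_Ioo_zero_one_eq_integral_Ioi_exp_neg {E : Type*} [NormedAddCommGroup E]
    [NormedSpace ℝ E] (g : ℝ → E) :
    ∫ t in Ioo (0:ℝ) 1, g t = ∫ x in Ioi 0, exp (-x) • g (exp (-x)) := by
  have hderiv (x : ℝ) : HasDerivWithinAt (fun x => exp (-x)) (-exp (-x)) (Ioi 0) x := by
    simpa using ((hasDerivAt_neg x).exp).hasDerivWithinAt
  have hinj : InjOn (fun x : ℝ => exp (-x)) (Ioi 0) :=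
    fun _ _ _ _ h => neg_injective (exp_injective h)
  rw [← image_exp_neg_Ioi_zero, integral_image_eq_integral_abs_deriv_smul measurableSet_Ioi
    (fun x _ => hderiv x) hinj]
  simp only [abs_neg, abs_of_pos (exp_pos _)]

theorem integral_pow_mul_neg_log_pow (n k : ℕ) :
    ∫ t in Ioo (0:ℝ) 1, t ^ n * (-log t) ^ k = k ! / (n + 1) ^ (k + 1) := by
  have hsubst (x : ℝ) : exp (-x) • (exp (-x) ^ n * (-log (exp (-x))) ^ k)
      = x ^ ((k + 1 : ℝ) - 1) * exp (-((n + 1) * x)) := by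
    rw [log_exp, neg_neg, smul_eq_mul, ← exp_nat_mul, add_sub_cancel_right, rpow_natCast,
      mul_left_comm, ← mul_assoc, ← exp_add]
    ring_nf
  rw [integral_Ioo_zero_one_eq_integral_Ioi_exp_neg]
  simp_rw [hsubst]
  rw [integral_rpow_mul_exp_neg_mul_Ioi (by positivity) (by positivity), Gamma_nat_eq_factorial]
  norm_cast
  simp [div_eq_mul_inv, mul_comm]

theorem integrableOn_pow_mul_neg_log_pow (n k : ℕ) :
    IntegrableOn (fun t : ℝ => t ^ n * (-log t) ^ k) (Ioo 0 1) :=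
  Integrable.of_integral_ne_zero (by rw [integral_pow_mul_neg_log_pow]; positivity)

theorem integral_tsum_mul_neg_log_pow {a : ℕ → ℝ} (k : ℕ)
    (ha : Summable fun n : ℕ => |a n| / ((n : ℝ) + 1) ^ (k + 1)) :
    ∫ t in Ioo (0:ℝ) 1, (∑' n, a n * t ^ n) * (-log t) ^ k
      = k ! * ∑' n : ℕ, a n / ((n : ℝ) + 1) ^ (k + 1) := by
  have hint (n : ℕ) : IntegrableOn (fun t => a n * (t ^ n * (-log t) ^ k)) (Ioo 0 1) :=
    (integrableOn_pow_mul_neg_log_pow n k).const_mul (a n)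
  have hnorm (n : ℕ) : ∫ t in Ioo (0:ℝ) 1, ‖a n * (t ^ n * (-log t) ^ k)‖
      = k ! * (|a n| / ((n : ℝ) + 1) ^ (k + 1)) := by
    rw [setIntegral_congr_fun measurableSet_Ioo (g := fun t => |a n| * (t ^ n * (-log t) ^ k))
      fun t ht => ?_, integral_const_mul, integral_pow_mul_neg_log_pow]
    · ring
    · have : 0 ≤ -log t := neg_nonneg.mpr (log_nonpos ht.1.le ht.2.le)
      rw [norm_mul, Real.norm_eq_abs, Real.norm_of_nonneg (by have := ht.1; positivity)]
  calc ∫ t in Ioo (0:ℝ) 1, (∑' n, a n * t ^ n) * (-log t) ^ k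
      = ∫ t in Ioo (0:ℝ) 1, ∑' n, a n * (t ^ n * (-log t) ^ k) := by
        simp_rw [← tsum_mul_right, mul_assoc]
    _ = ∑' n, ∫ t in Ioo (0:ℝ) 1, a n * (t ^ n * (-log t) ^ k) :=
        (integral_tsum_of_summable_integral_norm hint
          (by simpa only [hnorm] using ha.mul_left (k ! : ℝ))).symm
    _ = ∑' n : ℕ, k ! * (a n / ((n : ℝ) + 1) ^ (k + 1)) := by
        congr 1
        ext n
        rw [integral_const_mul, integral_pow_mul_neg_log_pow]
        ring
    _ = k ! * ∑' n : ℕ, a n / ((n : ℝ) + 1) ^ (k + 1) := tsum_mul_left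

/-- For every `r ≥ 1`,
`₍ᵣ₊₃₎F₍ᵣ₊₂₎({1}_{r+1}, 3/2, 3/2; {2}_{r+2}; 1)
  = (8(−1)^{r−1}/(π (r−1)!)) ∫₀¹ (K(t) − π/2) log^{r−1}(t)/t dt`. -/
theorem ellipticK_rep (r : ℕ) (hr : 1 ≤ r) :
    hyp (List.replicate (r + 1) (1 : ℝ) ++ [3 / 2, 3 / 2]) (List.replicate (r + 2) (2 : ℝ)) 1 =
      8 * (-1) ^ (r - 1) / (π * ((r - 1).factorial : ℝ)) *
        ∫ t in (0:ℝ)..1, (ellipticK t - π / 2) * Real.log t ^ (r - 1) / t := by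
  obtain ⟨k, rfl⟩ : ∃ k, r = k + 1 := ⟨r - 1, by omega⟩
  set S := ∑' n : ℕ, wallisCoeff (n + 1) ^ 2 / ((n : ℝ) + 1) ^ (k + 1)
  have hintegrand : ∀ t ∈ Ioo (0:ℝ) 1, (ellipticK t - π / 2) * log t ^ k / t
      = (-1) ^ k * ((∑' n, π / 2 * wallisCoeff (n + 1) ^ 2 * t ^ n) * (-log t) ^ k) := by
    rintro t ⟨ht0, ht1⟩
    have hlog : log t ^ k = (-1) ^ k * (-log t) ^ k := by rw [← mul_pow, neg_one_mul, neg_neg]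
    rw [(hasSum_ellipticK_sub_div (by rwa [abs_of_pos ht0]) ht0.ne').tsum_eq, hlog]
    ring
  have hintegral : ∫ t in (0:ℝ)..1, (ellipticK t - π / 2) * log t ^ k / t
      = (-1) ^ k * (k ! * (π / 2 * S)) := by
    rw [intervalIntegral.integral_of_le zero_le_one, integral_Ioc_eq_integral_Ioo,
      setIntegral_congr_fun measurableSet_Ioo hintegrand, integral_const_mul,
      integral_tsum_mul_neg_log_pow k ?_]
    · simp only [S, mul_div_assoc, tsum_mul_left]
    · simpa [abs_of_pos pi_div_two_pos, mul_div_assoc]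
        using (summable_wallisCoeff_succ_sq_div_pow k).mul_left (π / 2)
  rw [hyp_ones_three_halves_twos_one, tsum_mul_left, Nat.add_sub_cancel, hintegral]
  field_simp
  rw [← pow_mul, pow_mul', neg_one_sq, one_pow]
  ring
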